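/- arXiv:1706.01767 — 2 statements merged into one kernel-verified Lean document; each statement's English description precedes it below -/
import Mathlib

section
/- Let τ > 1 be a real algebraic integer whose minimal polynomial P(x) over ℚ is reciprocal of even degree d ≥ 4. Suppose there exists n ∈ ℕ, n ≥ 2, such that τⁿ has minimal polynomial P_n(x) = 1 + a_{1,n}x + a_{2,n}x² + ⋯ + a_{d-1,n}x^{d-1} + x^d over ℚ, which is also monic reciprocal of degree d with integer coefficients, satisfying |a_{d-1,n}| > (1/2)·(d/(d-2))·(2 + Σ_{k=2}^{d-2} |a_{k,n}|). Then τ is a Salem number: τ⁻¹ is a root of P(x) and all complex roots of P(x) other than τ and τ⁻¹ have absolute value 1. -/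
/-!
For a reciprocal polynomial `p = ∑ aₖ Xᵏ` of degree `d` one has `p(e^{iθ}) = e^{idθ/2} g(θ)` with
`g(θ) = ∑ aₖ cos((k - d/2)θ)` real. When `2 |a_{d-1}|` exceeds `2 + ∑_{k=2}^{d-2} |aₖ|`, the term
`2 a_{d-1} cos((d/2 - 1)θ)` dominates `g` at the points `θⱼ = 2πj/(d-2)`, where it equals
`± 2 a_{d-1}` with alternating signs, so `g` has `d - 2` zeros in `(0, 2π)`. Applied to the
minimal polynomial `Pₙ` of `τⁿ` this leaves room for only two roots off the unit circle,
namely `τⁿ` and `τ⁻ⁿ`.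

Since `[ℚ(τⁿ) : ℚ] = d = [ℚ(τ) : ℚ]`, we have `τ = r(τⁿ)` for some `r ∈ ℚ[X]`, hence `z = r(zⁿ)`
for every conjugate `z` of `τ`. A conjugate off the unit circle has `zⁿ ∈ {τⁿ, τ⁻ⁿ}`, so
`z ∈ {τ, τ⁻¹}`.
-/

open Polynomial Complex Finset
open scoped Real

theorem exists_mem_Ioo_eq_zero_of_mul_neg {f : ℝ → ℝ} {a b : ℝ} (hab : a ≤ b)
    (hf : ContinuousOn f (Set.Icc a b)) (h : f a * f b < 0) : ∃ c ∈ Set.Ioo a b, f c = 0 := by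
  rcases lt_or_gt_of_ne (left_ne_zero_of_mul h.ne) with ha | ha
  · exact intermediate_value_Ioo hab hf ⟨ha, pos_of_mul_neg_right h ha.le⟩
  · exact intermediate_value_Ioo' hab hf ⟨neg_of_mul_neg_right h ha.le, ha⟩

theorem mul_neg_of_abs_sub_lt_of_abs_add_lt {x y u : ℝ} (hx : |x - u| < |u|)
    (hy : |y + u| < |u|) : x * y < 0 := by
  rcases abs_lt.1 hx with ⟨hx₁, hx₂⟩
  rcases abs_lt.1 hy with ⟨hy₁, hy₂⟩
  rcases le_or_gt 0 u with hu | hu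
  · rw [abs_of_nonneg hu] at *
    exact mul_neg_of_pos_of_neg (by linarith) (by linarith)
  · rw [abs_of_neg hu] at *
    exact mul_neg_of_neg_of_pos (by linarith) (by linarith)

theorem lt_two_mul_of_half_mul_div_sub_two_mul_lt {F : Type*} [Field F] [LinearOrder F]
    [IsStrictOrderedRing F] {d T a : F} (hd : 2 < d) (hT : 0 ≤ T)
    (h : 1 / 2 * (d / (d - 2)) * T < a) : T < 2 * a := by
  have hfrac : 1 ≤ d / (d - 2) := by rw [le_div_iff₀ (by linarith)]; linarith
  nlinarith

theorem aeval_eq_zero_of_aeval_minpoly_eq_zero {K A B : Type*} [Field K] [Ring A] [Algebra K A]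
    [CommRing B] [Algebra K B] {α : A} {p : K[X]} (hp : aeval α p = 0) {z : B}
    (hz : aeval z (minpoly K α) = 0) : aeval z p = 0 :=
  aeval_eq_zero_of_dvd_aeval_eq_zero (minpoly.dvd K α hp) hz

open IntermediateField in
theorem exists_aeval_eq_of_natDegree_minpoly_eq {K L : Type*} [Field K] [Field L] [Algebra K L]
    {α β : L} (hα : IsIntegral K α) (hβ : β ∈ K⟮α⟯)
    (hdeg : (minpoly K β).natDegree = (minpoly K α).natDegree) : ∃ r : K[X], aeval β r = α := by
  have : FiniteDimensional K K⟮α⟯ := adjoin.finiteDimensional hα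
  have hβint : IsIntegral K β := isIntegral_iff.1 (IsIntegral.of_finite K (⟨β, hβ⟩ : K⟮α⟯))
  have heq : K⟮β⟯ = K⟮α⟯ := eq_of_le_of_finrank_eq (adjoin_simple_le_iff.2 hβ)
    (by rw [adjoin.finrank hβint, adjoin.finrank hα, hdeg])
  have hα' : α ∈ (K⟮β⟯).toSubalgebra := heq ▸ mem_adjoin_simple_self K α
  rwa [adjoin_simple_toSubalgebra_of_isAlgebraic hβint.isAlgebraic,
    Algebra.adjoin_singleton_eq_range_aeval] at hα'

theorem eq_or_eq_inv_of_norm_ne_one_of_pow {K L : Type*} [Field K] [NormedField L]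
    [Algebra K L] {α : L} (hα : IsIntegral K α) {n : ℕ} (hn : n ≠ 0)
    (hdeg : (minpoly K (α ^ n)).natDegree = (minpoly K α).natDegree)
    (hinv : aeval α⁻¹ (minpoly K α) = 0)
    (hpow : ∀ w, aeval w (minpoly K (α ^ n)) = 0 → ‖w‖ ≠ 1 → w = α ^ n ∨ w = (α ^ n)⁻¹)
    {z : L} (hz : aeval z (minpoly K α) = 0) (hz₁ : ‖z‖ ≠ 1) : z = α ∨ z = α⁻¹ := by
  obtain ⟨r, hr⟩ := exists_aeval_eq_of_natDegree_minpoly_eq hα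
    (pow_mem (IntermediateField.mem_adjoin_simple_self K α) n) hdeg
  have hlift (w : L) (hw : aeval w (minpoly K α) = 0) : aeval (w ^ n) r = w := by
    have h := aeval_eq_zero_of_aeval_minpoly_eq_zero (p := r.comp (X ^ n) - X)
      (by rw [map_sub, aeval_comp, map_pow, aeval_X, hr, sub_self]) hw
    rwa [map_sub, aeval_comp, map_pow, aeval_X, sub_eq_zero] at h
  have hzn : aeval (z ^ n) (minpoly K (α ^ n)) = 0 := by
    have h := aeval_eq_zero_of_aeval_minpoly_eq_zero (p := (minpoly K (α ^ n)).comp (X ^ n))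
      (by rw [aeval_comp, map_pow, aeval_X, minpoly.aeval]) hz
    rwa [aeval_comp, map_pow, aeval_X] at h
  have hzn₁ : ‖z ^ n‖ ≠ 1 := by
    rwa [norm_pow, ne_eq, pow_eq_one_iff_of_nonneg (norm_nonneg z) hn]
  rcases hpow _ hzn hzn₁ with h | h
  · exact .inl (by rw [← hlift z hz, h, hlift α (minpoly.aeval K α)])
  · exact .inr (by rw [← hlift z hz, h, ← inv_pow, hlift _ hinv])

namespace Polynomial

variable {K L : Type*}

theorem reflect_eq_self_of_coeff_eq [Semiring K] {p : K[X]} {d : ℕ}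
    (hrec : ∀ k ≤ d, p.coeff k = p.coeff (d - k)) : p.reflect d = p := by
  ext k
  rw [coeff_reflect]
  rcases le_or_gt k d with hk | hk
  · rw [revAt_le hk, hrec k hk]
  · rw [revAt_eq_self_of_lt hk]

theorem aeval_inv_eq_zero_of_coeff_eq [CommSemiring K] [Field L] [Algebra K L] {p : K[X]}
    {d : ℕ} (hdeg : p.natDegree ≤ d) (hrec : ∀ k ≤ d, p.coeff k = p.coeff (d - k)) {x : L}
    (hx : x ≠ 0) (hroot : aeval x p = 0) : aeval x⁻¹ p = 0 := by
  let _ := invertibleOfNonzero hx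
  rwa [← reflect_eq_self_of_coeff_eq hrec, aeval_def, ← invOf_eq_inv,
    eval₂_reflect_eq_zero_iff _ _ _ _ hdeg]

theorem mem_of_aeval_eq_zero_of_natDegree_le_card [CommRing K] [IsDomain K] [Field L]
    [Algebra K L] [Module.IsTorsionFree K L] {p : K[X]} (hp : p ≠ 0) {s : Finset L}
    (hs : ∀ y ∈ s, aeval y p = 0) (hcard : p.natDegree ≤ s.card) {x : L}
    (hx : aeval x p = 0) : x ∈ s := by
  classical
  by_contra hxs
  have hsub : (insert x s).val ⊆ p.aroots L := fun y hy ↦ by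
    rw [insert_val_of_notMem hxs, Multiset.mem_cons] at hy
    rcases hy with rfl | hy
    · exact mem_aroots.2 ⟨hp, hx⟩
    · exact mem_aroots.2 ⟨hp, hs y hy⟩
  have := (card_le_degree_of_subset_roots hsub).trans natDegree_map_le
  rw [card_insert_of_notMem hxs] at this
  omega

theorem eq_or_eq_of_norm_ne_one_of_natDegree_le [Field K] [NormedField L] [Algebra K L]
    {p : K[X]} (hp : p ≠ 0) {s : Finset L} (hs : ∀ z ∈ s, ‖z‖ = 1 ∧ aeval z p = 0)
    (hcard : p.natDegree ≤ s.card + 2) {a b : L} (ha : 1 < ‖a‖) (hb : ‖b‖ < 1)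
    (ha₀ : aeval a p = 0) (hb₀ : aeval b p = 0) {w : L} (hw₀ : aeval w p = 0) (hw : ‖w‖ ≠ 1) :
    w = a ∨ w = b := by
  classical
  have has : a ∉ insert b s := by
    simp only [mem_insert, not_or]
    exact ⟨fun h ↦ by rw [h] at ha; linarith, fun h ↦ ha.ne' (hs a h).1⟩
  have hbs : b ∉ s := fun h ↦ hb.ne (hs b h).1
  have hmem := mem_of_aeval_eq_zero_of_natDegree_le_card hp (s := insert a (insert b s))
    (by simpa [ha₀, hb₀] using fun z hz ↦ (hs z hz).2)
    (by rwa [card_insert_of_notMem has, card_insert_of_notMem hbs]) hw₀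
  simp only [mem_insert] at hmem
  rcases hmem with h | h | h
  · exact .inl h
  · exact .inr h
  · exact absurd (hs w h).1 hw

noncomputable def cosSum (p : ℝ[X]) (d : ℕ) (θ : ℝ) : ℝ :=
  ∑ k ∈ range (d + 1), p.coeff k * Real.cos ((k - d / 2 : ℝ) * θ)

section cosSum

variable {p : ℝ[X]} {d : ℕ}

theorem continuous_cosSum : Continuous (cosSum p d) := by
  unfold cosSum
  fun_prop

theorem aeval_exp_mul_I_eq_cosSum (hdeg : p.natDegree ≤ d)
    (hrec : ∀ k ≤ d, p.coeff k = p.coeff (d - k)) (θ : ℝ) :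
    aeval (exp (θ * I)) p = exp ((d / 2 * θ : ℝ) * I) * cosSum p d θ := by
  set x : ℕ → ℂ := fun k ↦ ((k - d / 2 : ℝ) * θ : ℝ) with hx
  have hreflect : ∑ k ∈ range (d + 1), (p.coeff k : ℂ) * exp (-x k * I) =
      ∑ k ∈ range (d + 1), (p.coeff k : ℂ) * exp (x k * I) := by
    rw [← sum_range_reflect]
    refine sum_congr rfl fun k hk ↦ ?_
    have hk : k ≤ d := Nat.lt_succ_iff.1 (mem_range.1 hk)
    rw [Nat.add_sub_cancel, ← hrec k hk, hx]
    push_cast [Nat.cast_sub hk]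
    ring_nf
  have hcos : (cosSum p d θ : ℂ) = ∑ k ∈ range (d + 1), (p.coeff k : ℂ) * exp (x k * I) := by
    calc (cosSum p d θ : ℂ)
        = ∑ k ∈ range (d + 1), (p.coeff k : ℂ) * ((exp (x k * I) + exp (-x k * I)) / 2) := by
          push_cast [cosSum, hx, Complex.cos]
          rfl
      _ = (∑ k ∈ range (d + 1), (p.coeff k : ℂ) * exp (x k * I) +
            ∑ k ∈ range (d + 1), (p.coeff k : ℂ) * exp (-x k * I)) / 2 := by
          rw [← sum_add_distrib, sum_div]
          exact sum_congr rfl fun k _ ↦ by ring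
      _ = _ := by rw [hreflect]; ring
  rw [aeval_eq_sum_range' (Nat.lt_succ_of_le hdeg), hcos, mul_sum]
  refine sum_congr rfl fun k _ ↦ ?_
  rw [← exp_nat_mul, real_smul, mul_left_comm _ (p.coeff k : ℂ), ← exp_add, hx]
  congr 2
  push_cast
  ring

theorem cosSum_eq (hd : 3 ≤ d) (hmonic : p.Monic) (hdeg : p.natDegree = d)
    (hrec : ∀ k ≤ d, p.coeff k = p.coeff (d - k)) (θ : ℝ) :
    cosSum p d θ = 2 * Real.cos (d / 2 * θ) + 2 * p.coeff (d - 1) * Real.cos ((d / 2 - 1) * θ) +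
      ∑ k ∈ Icc 2 (d - 2), p.coeff k * Real.cos ((k - d / 2 : ℝ) * θ) := by
  have hrange : range (d + 1) = {0, 1, d - 1, d} ∪ Icc 2 (d - 2) := by
    ext k
    simp only [mem_range, mem_union, mem_insert, mem_singleton, mem_Icc]
    omega
  have hdisj : Disjoint ({0, 1, d - 1, d} : Finset ℕ) (Icc 2 (d - 2)) := by
    simp only [disjoint_left, mem_insert, mem_singleton, mem_Icc]
    omega
  have hd₀ : p.coeff d = 1 := hdeg ▸ hmonic.coeff_natDegree
  have h₀ : p.coeff 0 = 1 := by rw [hrec 0 (by omega), Nat.sub_zero, hd₀]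
  have h₁ : p.coeff 1 = p.coeff (d - 1) := hrec 1 (by omega)
  have hcos₀ : Real.cos (((0 : ℕ) - d / 2 : ℝ) * θ) = Real.cos (d / 2 * θ) := by
    rw [← Real.cos_neg]; push_cast; ring_nf
  have hcos₁ : Real.cos (((1 : ℕ) - d / 2 : ℝ) * θ) = Real.cos ((d / 2 - 1) * θ) := by
    rw [← Real.cos_neg]; push_cast; ring_nf
  rw [cosSum, hrange, sum_union hdisj, sum_insert (by simp only [mem_insert, mem_singleton]; omega),
    sum_insert (by simp only [mem_insert, mem_singleton]; omega),
    sum_insert (by simp only [mem_singleton]; omega), sum_singleton, h₀, h₁, hd₀,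
    Nat.cast_sub (by omega : 1 ≤ d), hcos₀, hcos₁]
  ring_nf

theorem abs_cosSum_sub_le (hd : 3 ≤ d) (hmonic : p.Monic) (hdeg : p.natDegree = d)
    (hrec : ∀ k ≤ d, p.coeff k = p.coeff (d - k)) (θ : ℝ) :
    |cosSum p d θ - 2 * p.coeff (d - 1) * Real.cos ((d / 2 - 1) * θ)| ≤
      2 + ∑ k ∈ Icc 2 (d - 2), |p.coeff k| := by
  rw [cosSum_eq hd hmonic hdeg hrec, add_sub_right_comm, add_sub_cancel_right]
  refine (abs_add_le _ _).trans (add_le_add ?_ ?_)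
  · rw [abs_mul, abs_two]
    exact mul_le_of_le_one_right zero_le_two (Real.abs_cos_le_one _)
  · refine (abs_sum_le_sum_abs _ _).trans (sum_le_sum fun k _ ↦ ?_)
    rw [abs_mul]
    exact mul_le_of_le_one_right (abs_nonneg _) (Real.abs_cos_le_one _)

theorem cosSum_mul_cosSum_neg (hd : 3 ≤ d) (hmonic : p.Monic) (hdeg : p.natDegree = d)
    (hrec : ∀ k ≤ d, p.coeff k = p.coeff (d - k))
    (hdom : 2 + ∑ k ∈ Icc 2 (d - 2), |p.coeff k| < 2 * |p.coeff (d - 1)|) (j : ℕ) :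
    cosSum p d (2 * π * j / (d - 2)) * cosSum p d (2 * π * (j + 1) / (d - 2)) < 0 := by
  have hd₂ : (d - 2 : ℝ) ≠ 0 := by
    have : (3 : ℝ) ≤ d := by exact_mod_cast hd
    linarith
  have hcos (m : ℕ) : Real.cos ((d / 2 - 1) * (2 * π * m / (d - 2))) = (-1) ^ m := by
    rw [← Real.cos_nat_mul_pi]
    congr 1
    field_simp
  set u := 2 * p.coeff (d - 1) * (-1) ^ j
  have hu : |u| = 2 * |p.coeff (d - 1)| := by simp [u, abs_mul]
  refine mul_neg_of_abs_sub_lt_of_abs_add_lt (u := u) ?_ ?_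
  · rw [hu]
    refine lt_of_le_of_lt ?_ hdom
    simpa only [hcos] using abs_cosSum_sub_le hd hmonic hdeg hrec (2 * π * j / (d - 2))
  · rw [hu]
    refine lt_of_le_of_lt ?_ hdom
    have hcos' := hcos (j + 1)
    push_cast at hcos'
    have h := abs_cosSum_sub_le hd hmonic hdeg hrec (2 * π * (j + 1) / (d - 2))
    rwa [hcos', pow_succ, mul_neg_one, mul_neg, sub_neg_eq_add] at h

theorem exists_finset_norm_eq_one_aeval_eq_zero (hd : 3 ≤ d) (hmonic : p.Monic)
    (hdeg : p.natDegree = d) (hrec : ∀ k ≤ d, p.coeff k = p.coeff (d - k))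
    (hdom : 2 + ∑ k ∈ Icc 2 (d - 2), |p.coeff k| < 2 * |p.coeff (d - 1)|) :
    ∃ s : Finset ℂ, s.card = d - 2 ∧ ∀ z ∈ s, ‖z‖ = 1 ∧ aeval z p = 0 := by
  set θ : ℕ → ℝ := fun j ↦ 2 * π * j / (d - 2) with hθ
  have hd₂ : (0 : ℝ) < d - 2 := by
    have : (3 : ℝ) ≤ d := by exact_mod_cast hd
    linarith
  have hθmono : StrictMono θ := fun i j hij ↦ by
    simp only [hθ]
    gcongr
  have hzero (j : Fin (d - 2)) : ∃ c ∈ Set.Ioo (θ j) (θ (j + 1)), cosSum p d c = 0 :=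
    exists_mem_Ioo_eq_zero_of_mul_neg (hθmono.monotone j.1.le_succ) continuous_cosSum.continuousOn
      (by simpa [θ] using cosSum_mul_cosSum_neg hd hmonic hdeg hrec hdom j)
  choose c hc hc₀ using hzero
  have hcmono : StrictMono c := fun i j hij ↦
    (hc i).2.trans ((hθmono.monotone (Nat.succ_le_of_lt hij)).trans_lt (hc j).1)
  have hcIco (j : Fin (d - 2)) : c j ∈ Set.Ico 0 (2 * π) := by
    have hθ₀ : θ 0 = 0 := by simp [θ]
    have hθ₂ : θ (d - 2) = 2 * π := by
      simp only [θ]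
      rw [Nat.cast_sub (by omega), Nat.cast_two, mul_div_assoc, div_self hd₂.ne', mul_one]
    exact ⟨hθ₀ ▸ (hθmono.monotone (Nat.zero_le _)).trans (hc j).1.le,
      hθ₂ ▸ (hc j).2.trans_le (hθmono.monotone j.2)⟩
  have hinj : Function.Injective fun j ↦ exp (c j * I) := fun i j h ↦
    hcmono.injective (Circle.exp_injOn_Ico (by simp) (hcIco i) (hcIco j) (Circle.ext h))
  refine ⟨univ.image fun j ↦ exp (c j * I), by rw [card_image_of_injective _ hinj, card_univ,
    Fintype.card_fin], ?_⟩
  intro z hz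
  obtain ⟨j, -, rfl⟩ := mem_image.1 hz
  exact ⟨norm_exp_ofReal_mul_I _, by
    rw [aeval_exp_mul_I_eq_cosSum hdeg.le hrec, hc₀, ofReal_zero, mul_zero]⟩

theorem eq_or_eq_inv_of_aeval_eq_zero_of_norm_ne_one (hd : 3 ≤ d) (hmonic : p.Monic)
    (hdeg : p.natDegree = d) (hrec : ∀ k ≤ d, p.coeff k = p.coeff (d - k))
    (hdom : 2 + ∑ k ∈ Icc 2 (d - 2), |p.coeff k| < 2 * |p.coeff (d - 1)|) {β : ℝ} (hβ : 1 < β)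
    (hβ₀ : aeval β p = 0) {w : ℂ} (hw₀ : aeval w p = 0) (hw : ‖w‖ ≠ 1) :
    w = β ∨ w = (β : ℂ)⁻¹ := by
  obtain ⟨s, hscard, hs⟩ := exists_finset_norm_eq_one_aeval_eq_zero hd hmonic hdeg hrec hdom
  have hβC : aeval (β : ℂ) p = 0 := by
    rw [← coe_algebraMap, aeval_algebraMap_apply, hβ₀, map_zero]
  have hnorm : ‖(β : ℂ)‖ = β := by rw [norm_real, Real.norm_of_nonneg (by positivity)]
  refine eq_or_eq_of_norm_ne_one_of_natDegree_le hmonic.ne_zero hs (by omega) (by rwa [hnorm]) ?_ hβC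
    (aeval_inv_eq_zero_of_coeff_eq hdeg.le hrec (ofReal_ne_zero.2 (by positivity)) hβC) hw₀ hw
  rw [norm_inv, hnorm]
  exact inv_lt_one_of_one_lt₀ hβ

end cosSum

end Polynomial

theorem condition_implies_salem_general
    (τ : ℝ) (hτ : 1 < τ)
    (d : ℕ) (hd : d = (minpoly ℚ τ).natDegree) (hd4 : 4 ≤ d)
    (hrec : ∀ k : ℕ, k ≤ d → (minpoly ℚ τ).coeff k = (minpoly ℚ τ).coeff (d - k))
    (hex : ∃ n : ℕ, 2 ≤ n ∧
      (minpoly ℚ (τ ^ n)).Monic ∧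
      (minpoly ℚ (τ ^ n)).natDegree = d ∧
      (∀ k : ℕ, ∃ m : ℤ, (minpoly ℚ (τ ^ n)).coeff k = (m : ℚ)) ∧
      (∀ k : ℕ, k ≤ d → (minpoly ℚ (τ ^ n)).coeff k = (minpoly ℚ (τ ^ n)).coeff (d - k)) ∧
      |(minpoly ℚ (τ ^ n)).coeff (d - 1)| >
        (1 / 2) * ((d : ℚ) / ((d : ℚ) - 2)) *
          (2 + ∑ k ∈ Finset.Icc 2 (d - 2), |(minpoly ℚ (τ ^ n)).coeff k|)) :
    (Polynomial.aeval τ⁻¹) (minpoly ℚ τ) = 0 ∧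
      ∀ z ∈ ((minpoly ℚ τ).map (algebraMap ℚ ℂ)).roots,
        z ≠ (τ : ℂ) → z ≠ ((τ : ℂ))⁻¹ → ‖z‖ = 1 := by
  have hτint : IsIntegral ℚ τ := by
    by_contra h
    rw [minpoly.eq_zero h, natDegree_zero] at hd
    omega
  have hinv : aeval τ⁻¹ (minpoly ℚ τ) = 0 :=
    aeval_inv_eq_zero_of_coeff_eq hd.ge hrec (by positivity) (minpoly.aeval ℚ τ)
  refine ⟨hinv, fun z hz hzτ hzτinv ↦ by_contra fun hz₁ ↦ ?_⟩
  obtain ⟨n, hn, hmonic, hdegn, -, hrecn, hdomn⟩ := hex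
  have hP : minpoly ℚ (τ : ℂ) = minpoly ℚ τ := minpoly.algebraMap_eq (algebraMap ℝ ℂ).injective τ
  have hQ : minpoly ℚ ((τ : ℂ) ^ n) = minpoly ℚ (τ ^ n) := by
    rw [← ofReal_pow]
    exact minpoly.algebraMap_eq (algebraMap ℝ ℂ).injective _
  have hdom := lt_two_mul_of_half_mul_div_sub_two_mul_lt (by norm_cast; omega)
    (add_nonneg zero_le_two (sum_nonneg fun _ _ ↦ abs_nonneg _)) hdomn
  have hpow (w : ℂ) (hw₀ : aeval w (minpoly ℚ ((τ : ℂ) ^ n)) = 0) (hw : ‖w‖ ≠ 1) :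
      w = (τ : ℂ) ^ n ∨ w = ((τ : ℂ) ^ n)⁻¹ := by
    rw [← ofReal_pow]
    refine eq_or_eq_inv_of_aeval_eq_zero_of_norm_ne_one (p := (minpoly ℚ (τ ^ n)).map
      (algebraMap ℚ ℝ)) (d := d) (by omega) (hmonic.map _) (by rwa [natDegree_map])
      (fun k hk ↦ by simp [coeff_map, hrecn k hk])
      (by simp only [coeff_map, eq_ratCast]; exact_mod_cast hdom) (one_lt_pow₀ hτ (by omega))
      ?_ ?_ hw <;> rw [aeval_map_algebraMap]
    exacts [minpoly.aeval ℚ _, hQ ▸ hw₀]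
  have hinvC : aeval (τ : ℂ)⁻¹ (minpoly ℚ (τ : ℂ)) = 0 := by
    rw [hP, ← ofReal_inv, ← coe_algebraMap, aeval_algebraMap_apply, hinv, map_zero]
  rcases eq_or_eq_inv_of_norm_ne_one_of_pow (α := (τ : ℂ)) hτint.algebraMap (n := n) (by omega)
    (by rw [hP, hQ, hdegn, hd]) hinvC hpow (hP ▸ (mem_aroots.1 hz).2) hz₁ with h | h
  exacts [hzτ h, hzτinv h]

/-- Theorem 1 (sufficiency): let `τ > 1` be a real algebraic integer whose minimal
polynomial `P` over `ℚ` is reciprocal of even degree `d ≥ 4`.  If there is `n ≥ 2` such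
that the minimal polynomial `P_n` of `τ ^ n` is monic reciprocal of degree `d` with
integer coefficients and `|a_{d-1,n}| > (1/2) (d/(d-2)) (2 + ∑_{k=2}^{d-2} |a_{k,n}|)`,
then `τ` is a Salem number: `τ⁻¹` is a root of `P` and all complex roots of `P` other
than `τ` and `τ⁻¹` lie on the unit circle. -/
theorem condition_implies_salem
    (τ : ℝ) (hτ : 1 < τ) (hint : IsIntegral ℤ τ)
    (d : ℕ) (hd : d = (minpoly ℚ τ).natDegree) (hd4 : 4 ≤ d) (hdeven : Even d)
    (hrec : ∀ k : ℕ, k ≤ d → (minpoly ℚ τ).coeff k = (minpoly ℚ τ).coeff (d - k))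
    (hex : ∃ n : ℕ, 2 ≤ n ∧
      (minpoly ℚ (τ ^ n)).Monic ∧
      (minpoly ℚ (τ ^ n)).natDegree = d ∧
      (∀ k : ℕ, ∃ m : ℤ, (minpoly ℚ (τ ^ n)).coeff k = (m : ℚ)) ∧
      (∀ k : ℕ, k ≤ d → (minpoly ℚ (τ ^ n)).coeff k = (minpoly ℚ (τ ^ n)).coeff (d - k)) ∧
      |(minpoly ℚ (τ ^ n)).coeff (d - 1)| >
        (1 / 2) * ((d : ℚ) / ((d : ℚ) - 2)) *
          (2 + ∑ k ∈ Finset.Icc 2 (d - 2), |(minpoly ℚ (τ ^ n)).coeff k|)) :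
    (Polynomial.aeval τ⁻¹) (minpoly ℚ τ) = 0 ∧
      ∀ z ∈ ((minpoly ℚ τ).map (algebraMap ℚ ℂ)).roots,
        z ≠ (τ : ℂ) → z ≠ ((τ : ℂ))⁻¹ → ‖z‖ = 1 :=
  condition_implies_salem_general τ hτ d hd hd4 hrec hex
end

section
/- Let τ > 1 be a Salem number of degree d and, for n ∈ ℕ, let a_{d-1,n} denote the coefficient of x^{d-1} in the minimal polynomial P_n(x) of τⁿ over ℚ. Then a_{d-1,n} is nonzero for all sufficiently large n, and the ratio a_{d-1,n+1}/a_{d-1,n} tends to τ as n → ∞. -/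
/-- A Salem number: a real algebraic integer `τ > 1` of degree at least 4 over `ℚ`,
conjugate to `τ⁻¹`, all of whose complex conjugates other than `τ` and `τ⁻¹` are
of absolute value 1. -/
def IsSalem (τ : ℝ) : Prop :=
  1 < τ ∧ IsIntegral ℤ τ ∧ 4 ≤ (minpoly ℚ τ).natDegree ∧
    (Polynomial.aeval τ⁻¹) (minpoly ℚ τ) = 0 ∧
    ∀ z ∈ ((minpoly ℚ τ).map (algebraMap ℚ ℂ)).roots,
      z ≠ (τ : ℂ) → z ≠ ((τ : ℂ))⁻¹ → ‖z‖ = 1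

/-!
For `n ≠ 0`, every conjugate `z` of `τ` over `ℚ(τⁿ)` is a conjugate of `τ` over `ℚ` with
`zⁿ = τⁿ`, hence `|z| = τ`, which forces `z = τ`; so `ℚ(τⁿ) = ℚ(τ)` and `τⁿ` again has degree `d`.
Its minimal polynomial then has `-a_{d-1,n} = Tr(τⁿ) = ∑ zⁿ` over the conjugates `z` of `τ`, and
all of them except `τ` lie in the closed unit disc, so `a_{d-1,n} = -τⁿ + O(1)`. Thus
`a_{d-1,n} / τⁿ → -1`, which gives both claims.
-/

open Polynomial IntermediateField Filter Topology

theorem Multiset.norm_sum_map_sub_le {α E : Type*} [DecidableEq α] [SeminormedAddCommGroup E]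
    {s : Multiset α} {a : α} (hs : s.Nodup) (ha : a ∈ s) (f : α → E) {C : ℝ}
    (hf : ∀ z ∈ s, z ≠ a → ‖f z‖ ≤ C) :
    ‖(s.map f).sum - f a‖ ≤ ((s.card : ℝ) - 1) * C := by
  have hcard : ((s.erase a).card : ℝ) = s.card - 1 := by
    rw [Multiset.card_erase_of_mem ha, Nat.pred_eq_sub_one,
      Nat.cast_pred (Multiset.card_pos_iff_exists_mem.mpr ⟨a, ha⟩)]
  conv_lhs => rw [← Multiset.cons_erase ha, Multiset.map_cons, Multiset.sum_cons,
    add_sub_cancel_left]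
  calc ‖((s.erase a).map f).sum‖ ≤ (((s.erase a).map f).map norm).sum :=
        norm_multiset_sum_le _
    _ ≤ (((s.erase a).map f).map norm).card • C := by
        refine Multiset.sum_le_card_nsmul _ _ fun x hx => ?_
        obtain ⟨z, hz, rfl⟩ := Multiset.mem_map.mp (Multiset.map_map _ _ _ ▸ hx)
        rw [hs.mem_erase_iff] at hz
        exact hf z hz.2 hz.1
    _ = ((s.card : ℝ) - 1) * C := by
        rw [Multiset.card_map, Multiset.card_map, nsmul_eq_mul, hcard]

theorem tendsto_div_pow_of_norm_sub_mul_pow_le {𝕜 : Type*} [NormedField 𝕜] {u : ℕ → 𝕜}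
    {r c : 𝕜} {C : ℝ} (hr : 1 < ‖r‖) (hu : ∀ᶠ n in atTop, ‖u n - c * r ^ n‖ ≤ C) :
    Tendsto (fun n => u n / r ^ n) atTop (𝓝 c) := by
  have hr0 : r ≠ 0 := norm_pos_iff.mp (one_pos.trans hr)
  rw [← tendsto_sub_nhds_zero_iff]
  refine squeeze_zero_norm' (a := fun n => C * ‖r‖⁻¹ ^ n) ?_ ?_
  · filter_upwards [hu] with n hn
    rw [← mul_div_cancel_right₀ c (pow_ne_zero n hr0), ← sub_div, norm_div, norm_pow,
      inv_pow, ← div_eq_mul_inv]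
    gcongr
  · simpa using (tendsto_pow_atTop_nhds_zero_of_lt_one (inv_nonneg.mpr (norm_nonneg r))
      (inv_lt_one_of_one_lt₀ hr)).const_mul C

theorem tendsto_succ_div_of_tendsto_div_pow {𝕜 : Type*} [NormedField 𝕜] {u : ℕ → 𝕜} {r c : 𝕜}
    (hr : r ≠ 0) (hc : c ≠ 0) (h : Tendsto (fun n => u n / r ^ n) atTop (𝓝 c)) :
    Tendsto (fun n => u (n + 1) / u n) atTop (𝓝 r) := by
  have hquot := ((h.comp (tendsto_add_atTop_nat 1)).div h hc).const_mul r
  rw [div_self hc, mul_one] at hquot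
  refine hquot.congr fun n => ?_
  rcases eq_or_ne (u n) 0 with hun | hun
  · simp [hun]
  · simp only [Pi.div_apply, Function.comp_apply, pow_succ]
    field_simp

theorem PowerBasis.sum_algHom_apply_gen {K L E M : Type*} [Field K] [Field L] [Field E]
    [Algebra K L] [Algebra K E] [AddCommMonoid M] [Fintype (L →ₐ[K] E)]
    (pb : PowerBasis K L) (hsep : IsSeparable K pb.gen) (f : E → M) :
    ∑ σ : L →ₐ[K] E, f (σ pb.gen) = (((minpoly K pb.gen).aroots E).map f).sum := by
  classical
  rw [Fintype.sum_equiv pb.liftEquiv' _ (fun y => f y) (fun σ => by simp),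
    Finset.sum_mem_multiset _ _ f (fun _ => rfl), Finset.sum_eq_multiset_sum,
    Multiset.toFinset_val, Multiset.dedup_eq_self.mpr (nodup_roots (Separable.map hsep))]

theorem mem_range_of_forall_mem_aroots_eq {F L Ω : Type*} [Field F] [Field L] [Field Ω]
    [IsAlgClosed Ω] [Algebra F L] [Algebra F Ω] [Algebra L Ω] [IsScalarTower F L Ω] {x : L}
    (hx : IsSeparable F x) (h : ∀ z ∈ (minpoly F x).aroots Ω, z = algebraMap L Ω x) :
    x ∈ (algebraMap F L).range := by
  rw [← minpoly.natDegree_eq_one_iff, ← IsAlgClosed.card_aroots_eq_natDegree (B := Ω)]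
  have hle : (minpoly F x).aroots Ω ≤ {algebraMap L Ω x} :=
    (Multiset.le_iff_subset (nodup_roots (Separable.map hx))).mpr fun z hz => by
      simpa using h z hz
  have hpos : 0 < ((minpoly F x).aroots Ω).card := by
    rw [IsAlgClosed.card_aroots_eq_natDegree]
    exact minpoly.natDegree_pos hx.isIntegral
  have hcard := Multiset.card_le_card hle
  rw [Multiset.card_singleton] at hcard
  omega

theorem sum_aroots_pow_eq_neg_nextCoeff_minpoly_pow {K L Ω : Type*} [Field K] [Field L] [Field Ω]
    [IsAlgClosed Ω] [Algebra K L] [Algebra K Ω] {α : L} (hα : IsSeparable K α) {n : ℕ}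
    (hdeg : (minpoly K (α ^ n)).natDegree = (minpoly K α).natDegree) :
    (((minpoly K α).aroots Ω).map (· ^ n)).sum =
      algebraMap K Ω (-(minpoly K (α ^ n)).nextCoeff) := by
  have hint := hα.isIntegral
  have : FiniteDimensional K K⟮α⟯ := adjoin.finiteDimensional hint
  have : Algebra.IsSeparable K K⟮α⟯ := (isSeparable_adjoin_simple_iff_isSeparable K L).mpr hα
  set pb := adjoin.powerBasis hint
  set x := pb.gen ^ n
  have hmin : minpoly K x = minpoly K (α ^ n) := by
    rw [← minpoly.algebraMap_eq (algebraMap K⟮α⟯ L).injective, map_pow, adjoin.powerBasis_gen,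
      AdjoinSimple.algebraMap_gen]
  have hgen : minpoly K pb.gen = minpoly K α := by rw [adjoin.powerBasis_gen, minpoly_gen]
  have hrank : Module.finrank K⟮x⟯ K⟮α⟯ = 1 := by
    have hprod := Module.finrank_mul_finrank K K⟮x⟯ K⟮α⟯
    rw [adjoin.finrank (.of_finite K x), adjoin.finrank hint, hmin, hdeg] at hprod
    exact (Nat.mul_eq_left (minpoly.natDegree_pos hint).ne').mp hprod
  calc (((minpoly K α).aroots Ω).map (· ^ n)).sum
      = ∑ σ : K⟮α⟯ →ₐ[K] Ω, (σ pb.gen) ^ n := by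
        rw [pb.sum_algHom_apply_gen (Algebra.IsSeparable.isSeparable K _) (· ^ n), hgen]
    _ = algebraMap K Ω (Algebra.trace K K⟮α⟯ x) := by
        simp only [← map_pow, trace_eq_sum_embeddings Ω, x]
    _ = algebraMap K Ω (-(minpoly K (α ^ n)).nextCoeff) := by
        rw [trace_eq_finrank_mul_minpoly_nextCoeff, hrank, hmin, Nat.cast_one, one_mul]

namespace IsSalem

variable {τ : ℝ} (hτ : IsSalem τ)
include hτ

theorem one_lt : 1 < τ := hτ.1

theorem pos : 0 < τ := one_pos.trans hτ.one_lt

theorem isIntegral : IsIntegral ℚ τ := hτ.2.1.tower_top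

theorem isSeparable : IsSeparable ℚ τ := (minpoly.irreducible hτ.isIntegral).separable

theorem norm_le_one_of_mem_aroots {z : ℂ} (hz : z ∈ (minpoly ℚ τ).aroots ℂ) (hzτ : z ≠ τ) :
    ‖z‖ ≤ 1 := by
  by_cases hzinv : z = (τ : ℂ)⁻¹
  · rw [hzinv, norm_inv, Complex.norm_real, Real.norm_of_nonneg hτ.pos.le]
    exact inv_le_one_of_one_le₀ hτ.one_lt.le
  · exact (hτ.2.2.2.2 z hz hzτ hzinv).le

theorem adjoin_pow_eq {n : ℕ} (hn : n ≠ 0) : ℚ⟮τ ^ n⟯ = ℚ⟮τ⟯ := by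
  refine le_antisymm (adjoin_simple_le_iff.mpr (pow_mem (mem_adjoin_simple_self ℚ τ) n)) ?_
  rw [adjoin_simple_le_iff]
  set F := ℚ⟮τ ^ n⟯
  have hint : IsIntegral F τ := hτ.isIntegral.tower_top
  suffices hroots : ∀ z ∈ (minpoly F τ).aroots ℂ, z = algebraMap ℝ ℂ τ by
    obtain ⟨y, hy⟩ :=
      mem_range_of_forall_mem_aroots_eq (minpoly.irreducible hint).separable hroots
    exact hy ▸ y.2
  intro z hz
  have hzF : aeval z (minpoly F τ) = 0 := (mem_aroots.mp hz).2
  have hzτ : z ∈ (minpoly ℚ τ).aroots ℂ := by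
    refine mem_aroots.mpr ⟨minpoly.ne_zero hτ.isIntegral, ?_⟩
    rw [← aeval_map_algebraMap F]
    exact aeval_eq_zero_of_dvd_aeval_eq_zero (minpoly.dvd_map_of_isScalarTower ℚ F τ) hzF
  have hpow : z ^ n = (τ : ℂ) ^ n := by
    have hdvd : minpoly F τ ∣ X ^ n - C ⟨τ ^ n, mem_adjoin_simple_self ℚ _⟩ :=
      minpoly.dvd F τ (by simp)
    simpa [sub_eq_zero, IsScalarTower.algebraMap_apply F ℝ ℂ] using
      aeval_eq_zero_of_dvd_aeval_eq_zero hdvd hzF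
  by_contra hne
  have hnorm : ‖z‖ ^ n = τ ^ n := by
    rw [← norm_pow, hpow, norm_pow, Complex.norm_real, Real.norm_of_nonneg hτ.pos.le]
  have hlt : ‖z‖ ^ n < τ ^ n :=
    (pow_le_one₀ (norm_nonneg z) (hτ.norm_le_one_of_mem_aroots hzτ hne)).trans_lt
      (one_lt_pow₀ hτ.one_lt hn)
  exact hlt.ne hnorm

theorem natDegree_minpoly_pow {n : ℕ} (hn : n ≠ 0) :
    (minpoly ℚ (τ ^ n)).natDegree = (minpoly ℚ τ).natDegree := by
  rw [← adjoin.finrank (hτ.isIntegral.pow n), hτ.adjoin_pow_eq hn, adjoin.finrank hτ.isIntegral]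

theorem abs_coeff_minpoly_pow_add_pow_le {n : ℕ} (hn : n ≠ 0) :
    |((minpoly ℚ (τ ^ n)).coeff ((minpoly ℚ τ).natDegree - 1) : ℝ) + τ ^ n| ≤
      (minpoly ℚ τ).natDegree - 1 := by
  classical
  have hdeg := hτ.natDegree_minpoly_pow hn
  have hcoeff : (minpoly ℚ (τ ^ n)).nextCoeff =
      (minpoly ℚ (τ ^ n)).coeff ((minpoly ℚ τ).natDegree - 1) := by
    rw [nextCoeff_of_natDegree_pos (hdeg ▸ minpoly.natDegree_pos hτ.isIntegral), hdeg]
  have hτmem : (τ : ℂ) ∈ (minpoly ℚ τ).aroots ℂ :=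
    mem_aroots.mpr ⟨minpoly.ne_zero hτ.isIntegral, by
      simpa using aeval_algebraMap_apply ℂ τ (minpoly ℚ τ)⟩
  have hbound := Multiset.norm_sum_map_sub_le (nodup_roots (Separable.map hτ.isSeparable))
    hτmem (· ^ n) (C := 1) fun z hz hne => by
      simpa using pow_le_one₀ (norm_nonneg z) (hτ.norm_le_one_of_mem_aroots hz hne)
  rw [IsAlgClosed.card_aroots_eq_natDegree, mul_one,
    sum_aroots_pow_eq_neg_nextCoeff_minpoly_pow hτ.isSeparable hdeg, hcoeff, map_neg,
    ← neg_add', norm_neg] at hbound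
  convert hbound using 1
  rw [← Real.norm_eq_abs, ← Complex.norm_real]
  push_cast
  rfl

end IsSalem

/-- Theorem 3(a), first part: if `τ` is a Salem number of degree `d` and `a_{d-1,n}`
is the coefficient of `x^(d-1)` in the minimal polynomial of `τ ^ n`, then
`a_{d-1,n} ≠ 0` for all sufficiently large `n` and `a_{d-1,n+1} / a_{d-1,n} → τ`. -/
theorem salem_coeff_ratio_tendsto
    (τ : ℝ) (hτ : IsSalem τ) (d : ℕ) (hd : d = (minpoly ℚ τ).natDegree)
    (a : ℕ → ℝ) (ha : ∀ n, a n = ((minpoly ℚ (τ ^ n)).coeff (d - 1) : ℝ)) :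
    (∀ᶠ n in Filter.atTop, a n ≠ 0) ∧
      Filter.Tendsto (fun n => a (n + 1) / a n) Filter.atTop (nhds τ) := by
  subst hd
  have hbound : ∀ᶠ n in atTop, ‖a n - (-1) * τ ^ n‖ ≤ (minpoly ℚ τ).natDegree - 1 := by
    filter_upwards [eventually_ne_atTop 0] with n hn
    rw [ha, Real.norm_eq_abs, neg_one_mul, sub_neg_eq_add]
    exact hτ.abs_coeff_minpoly_pow_add_pow_le hn
  have hlim : Tendsto (fun n => a n / τ ^ n) atTop (𝓝 (-1)) :=
    tendsto_div_pow_of_norm_sub_mul_pow_le (by rw [Real.norm_of_nonneg hτ.pos.le]; exact hτ.one_lt)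
      hbound
  refine ⟨?_, tendsto_succ_div_of_tendsto_div_pow hτ.pos.ne' (by norm_num) hlim⟩
  filter_upwards [hlim.eventually_ne (by norm_num : (-1 : ℝ) ≠ 0)] with n hn han
  exact hn (by rw [han, zero_div])
end
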